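/- Fix m, l, g > 0 and let ρ ∈ ℝ satisfy 0 < ρ < m. Then the upright equilibrium x_e = (Ω₁, Ω₂, v, Γ) = (0, 0, 0, e₃) of the spherical-pendulum closed-loop system is Lyapunov stable: for every ε > 0 there exists δ > 0 such that every solution (Ω₁, Ω₂, v, Γ) : ℝ → ℝ × ℝ × ℝ³ × ℝ³ of the spherical-pendulum closed-loop system whose initial value satisfies ‖(Ω₁(0), Ω₂(0), v(0), Γ(0)) − x_e‖ < δ satisfies ‖(Ω₁(t), Ω₂(t), v(t), Γ(t)) − x_e‖ < ε for all t ≥ 0. -/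

import Mathlib

/-!
Energy–Casimir argument. Along solutions `Γ' = Γ × Ω` and `p' = p × Ω` keep `|Γ|²` and `|p|²`
constant, and eliminating `v'` from the `μ`- and `p`-equations gives
`m l² (m − ρ) (Ω₁', Ω₂') = ρ m g l (−Γ₂, Γ₁)`, so the energy `m l² (m − ρ) |Ω|² − 2 ρ m g l Γ₃`
is conserved as well. Hence
`V = m l² (m − ρ) |Ω|² + ρ m g l |Γ − e₃|² + 2 ρ |p|²` is constant along solutions. For
`0 < ρ < m` it is a positive definite quadratic form in `(Ω, v, Γ − e₃)`, so
`c₁ ‖x − x_e‖² ≤ V ≤ c₂ ‖x − x_e‖²`, and `δ = ε √(c₁ / c₂)` works.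
-/

open Matrix

/-- The spherical-pendulum closed-loop system: with `Ω = (Ω₁, Ω₂, 0)`,
`μ = (m l² Ω₁ − m l v₂, m l² Ω₂ + m l v₁, 0)` and
`p = (ρ v₁ + m l Ω₂, ρ v₂ − m l Ω₁, ρ v₃)`, the first two components of
`μ' = μ × Ω + p × v − m g l (e₃ × Γ)` hold, together with `p' = p × Ω` and
`Γ' = Γ × Ω`. -/
def SphPendCL (m l g ρ : ℝ) (Ω₁ Ω₂ : ℝ → ℝ) (v Γ : ℝ → Fin 3 → ℝ) : Prop :=
  let Ω : ℝ → Fin 3 → ℝ := fun t => ![Ω₁ t, Ω₂ t, 0]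
  let μ : ℝ → Fin 3 → ℝ := fun t =>
    ![m * l ^ 2 * Ω₁ t - m * l * v t 1, m * l ^ 2 * Ω₂ t + m * l * v t 0, 0]
  let p : ℝ → Fin 3 → ℝ := fun t =>
    ![ρ * v t 0 + m * l * Ω₂ t, ρ * v t 1 - m * l * Ω₁ t, ρ * v t 2]
  Differentiable ℝ Ω₁ ∧ Differentiable ℝ Ω₂ ∧ Differentiable ℝ v ∧ Differentiable ℝ Γ ∧
  (∀ t, deriv μ t 0
      = (μ t ⨯₃ Ω t + p t ⨯₃ v t - (m * g * l) • (![(0 : ℝ), 0, 1] ⨯₃ Γ t)) 0) ∧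
  (∀ t, deriv μ t 1
      = (μ t ⨯₃ Ω t + p t ⨯₃ v t - (m * g * l) • (![(0 : ℝ), 0, 1] ⨯₃ Γ t)) 1) ∧
  (∀ t, deriv p t = p t ⨯₃ Ω t) ∧
  (∀ t, deriv Γ t = Γ t ⨯₃ Ω t)

theorem hasDerivAt_vec3 {a b c : ℝ → ℝ} {a' b' c' t : ℝ} (ha : HasDerivAt a a' t)
    (hb : HasDerivAt b b' t) (hc : HasDerivAt c c' t) :
    HasDerivAt (fun s => ![a s, b s, c s]) ![a', b', c'] t :=
  hasDerivAt_pi.2 fun i => by fin_cases i <;> assumption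

theorem HasDerivAt.dotProduct_self {n : ℕ} {f : ℝ → Fin n → ℝ} {f' : Fin n → ℝ} {t : ℝ}
    (h : HasDerivAt f f' t) : HasDerivAt (fun s => f s ⬝ᵥ f s) (2 * (f t ⬝ᵥ f')) t := by
  refine (HasDerivAt.fun_sum (u := Finset.univ) fun i _ =>
    (hasDerivAt_pi.1 h i).fun_mul (hasDerivAt_pi.1 h i)).congr_deriv ?_
  rw [dotProduct, Finset.mul_sum]
  exact Finset.sum_congr rfl fun i _ => by ring

theorem eq_of_forall_hasDerivAt_zero {f : ℝ → ℝ} (h : ∀ s, HasDerivAt f 0 s) (t : ℝ) :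
    f t = f 0 :=
  is_const_of_deriv_eq_zero (fun s => (h s).differentiableAt) (fun s => (h s).deriv) t 0

theorem dotProduct_self_eq_of_deriv_eq_cross {f w : ℝ → Fin 3 → ℝ} (hf : Differentiable ℝ f)
    (h : ∀ t, deriv f t = f t ⨯₃ w t) (t : ℝ) : f t ⬝ᵥ f t = f 0 ⬝ᵥ f 0 := by
  refine eq_of_forall_hasDerivAt_zero (f := fun s => f s ⬝ᵥ f s) (fun s => ?_) t
  simpa [h, dot_self_cross] using (hf s).hasDerivAt.dotProduct_self

theorem dotProduct_self_nonneg {n R : Type*} [Fintype n] [CommRing R] [LinearOrder R]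
    [IsStrictOrderedRing R] (v : n → R) : 0 ≤ v ⬝ᵥ v :=
  Finset.sum_nonneg fun i _ => mul_self_nonneg (v i)

theorem sqrt_lt_of_mul_le_mul {a b c₁ c₂ ε : ℝ} (hc₁ : 0 < c₁) (hc₂ : 0 < c₂)
    (hab : c₁ * b ≤ c₂ * a) (ha : √a < ε * √(c₁ / c₂)) : √b < ε :=
  calc √b ≤ √(c₂ / c₁) * √a := by
        rw [← Real.sqrt_mul (by positivity)]
        exact Real.sqrt_le_sqrt (by rw [div_mul_eq_mul_div, le_div_iff₀ hc₁]; linarith)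
    _ < √(c₂ / c₁) * (ε * √(c₁ / c₂)) := by gcongr
    _ = ε := by
        rw [mul_left_comm, ← Real.sqrt_mul (by positivity), div_mul_div_cancel₀' hc₂.ne',
          div_self hc₁.ne', Real.sqrt_one, mul_one]

def sphPendMomentum (m l ρ Ω₁ Ω₂ : ℝ) (v : Fin 3 → ℝ) : Fin 3 → ℝ :=
  ![ρ * v 0 + m * l * Ω₂, ρ * v 1 - m * l * Ω₁, ρ * v 2]

def sphPendLyapunov (m l g ρ Ω₁ Ω₂ : ℝ) (v Γ : Fin 3 → ℝ) : ℝ :=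
  m * l ^ 2 * (m - ρ) * (Ω₁ ^ 2 + Ω₂ ^ 2)
    + ρ * m * g * l * ((Γ - ![0, 0, 1]) ⬝ᵥ (Γ - ![0, 0, 1]))
    + 2 * ρ * (sphPendMomentum m l ρ Ω₁ Ω₂ v ⬝ᵥ sphPendMomentum m l ρ Ω₁ Ω₂ v)

def uprightSqDist (Ω₁ Ω₂ : ℝ) (v Γ : Fin 3 → ℝ) : ℝ :=
  Ω₁ ^ 2 + Ω₂ ^ 2 + v ⬝ᵥ v + (Γ - ![(0 : ℝ), 0, 1]) ⬝ᵥ (Γ - ![(0 : ℝ), 0, 1])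

theorem sphPendLyapunov_eq_energy_add_casimirs (m l g ρ Ω₁ Ω₂ : ℝ) (v Γ : Fin 3 → ℝ) :
    sphPendLyapunov m l g ρ Ω₁ Ω₂ v Γ
      = (m * l ^ 2 * (m - ρ) * (Ω₁ ^ 2 + Ω₂ ^ 2) - 2 * ρ * m * g * l * Γ 2)
        + ρ * m * g * l * (Γ ⬝ᵥ Γ + 1)
        + 2 * ρ * (sphPendMomentum m l ρ Ω₁ Ω₂ v ⬝ᵥ sphPendMomentum m l ρ Ω₁ Ω₂ v) := by
  simp only [sphPendLyapunov, dotProduct, Fin.sum_univ_three, Pi.sub_apply, cons_val_zero,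
    cons_val_one, cons_val_two, head_cons, tail_cons]
  ring

theorem sq_mul_dotProduct_self_le (m l ρ Ω₁ Ω₂ : ℝ) (v : Fin 3 → ℝ) :
    ρ ^ 2 * (v ⬝ᵥ v) ≤ 2 * (sphPendMomentum m l ρ Ω₁ Ω₂ v ⬝ᵥ sphPendMomentum m l ρ Ω₁ Ω₂ v)
      + 2 * m ^ 2 * l ^ 2 * (Ω₁ ^ 2 + Ω₂ ^ 2) := by
  simp only [sphPendMomentum, dotProduct, Fin.sum_univ_three, cons_val_zero, cons_val_one,
    cons_val_two, head_cons, tail_cons]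
  nlinarith [sq_nonneg (ρ * v 0 + 2 * m * l * Ω₂), sq_nonneg (ρ * v 1 - 2 * m * l * Ω₁),
    sq_nonneg (ρ * v 2)]

theorem dotProduct_self_sphPendMomentum_le (m l ρ Ω₁ Ω₂ : ℝ) (v : Fin 3 → ℝ) :
    sphPendMomentum m l ρ Ω₁ Ω₂ v ⬝ᵥ sphPendMomentum m l ρ Ω₁ Ω₂ v
      ≤ 2 * ρ ^ 2 * (v ⬝ᵥ v) + 2 * m ^ 2 * l ^ 2 * (Ω₁ ^ 2 + Ω₂ ^ 2) := by
  simp only [sphPendMomentum, dotProduct, Fin.sum_univ_three, cons_val_zero, cons_val_one,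
    cons_val_two, head_cons, tail_cons]
  nlinarith [sq_nonneg (ρ * v 0 - m * l * Ω₂), sq_nonneg (ρ * v 1 + m * l * Ω₁),
    sq_nonneg (ρ * v 2)]

theorem exists_pos_mul_uprightSqDist_le_sphPendLyapunov {m l g ρ : ℝ} (hl : 0 < l)
    (hg : 0 < g) (hρ : 0 < ρ) (hρm : ρ < m) :
    ∃ c > 0, ∀ Ω₁ Ω₂ v Γ, c * uprightSqDist Ω₁ Ω₂ v Γ ≤ sphPendLyapunov m l g ρ Ω₁ Ω₂ v Γ := by
  have hm : 0 < m := hρ.trans hρm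
  have hA : 0 < m * l ^ 2 * (m - ρ) := by have := sub_pos.2 hρm; positivity
  have hK : 0 < ρ ^ 2 + 2 * m ^ 2 * l ^ 2 := by positivity
  set c := min (ρ * m * g * l)
    (min (ρ ^ 3) (m * l ^ 2 * (m - ρ) * ρ ^ 2 / (ρ ^ 2 + 2 * m ^ 2 * l ^ 2)))
  have hcB : c ≤ ρ * m * g * l := min_le_left _ _
  have hcρ : c ≤ ρ ^ 3 := (min_le_right _ _).trans (min_le_left _ _)
  have hcA : c * (ρ ^ 2 + 2 * m ^ 2 * l ^ 2) ≤ m * l ^ 2 * (m - ρ) * ρ ^ 2 :=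
    (le_div_iff₀ hK).1 ((min_le_right _ _).trans (min_le_right _ _))
  have hc : 0 < c := lt_min (by positivity) (lt_min (by positivity) (by positivity))
  refine ⟨c, hc, fun Ω₁ Ω₂ v Γ => ?_⟩
  have hv := sq_mul_dotProduct_self_le m l ρ Ω₁ Ω₂ v
  have hX : 0 ≤ Ω₁ ^ 2 + Ω₂ ^ 2 := by positivity
  have hY := dotProduct_self_nonneg (Γ - ![0, 0, 1])
  have hP := dotProduct_self_nonneg (sphPendMomentum m l ρ Ω₁ Ω₂ v)
  unfold uprightSqDist sphPendLyapunov
  refine le_of_mul_le_mul_left ?_ (by positivity : (0 : ℝ) < ρ ^ 2)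
  nlinarith [mul_le_mul_of_nonneg_left hv hc.le, mul_le_mul_of_nonneg_right hcA hX,
    mul_le_mul_of_nonneg_right hcρ hP, mul_le_mul_of_nonneg_right hcB hY]

theorem exists_pos_sphPendLyapunov_le_mul_uprightSqDist (m l g ρ : ℝ) :
    ∃ c > 0, ∀ Ω₁ Ω₂ v Γ, sphPendLyapunov m l g ρ Ω₁ Ω₂ v Γ ≤ c * uprightSqDist Ω₁ Ω₂ v Γ := by
  set A := m * l ^ 2 * (m - ρ)
  set B := ρ * m * g * l
  set K := |ρ| * (ρ ^ 2 + m ^ 2 * l ^ 2)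
  have hK : 0 ≤ K := by positivity
  refine ⟨|A| + |B| + 4 * K + 1, by positivity, fun Ω₁ Ω₂ v Γ => ?_⟩
  have hP := dotProduct_self_sphPendMomentum_le m l ρ Ω₁ Ω₂ v
  have hX : 0 ≤ Ω₁ ^ 2 + Ω₂ ^ 2 := by positivity
  have hW := dotProduct_self_nonneg v
  have hY := dotProduct_self_nonneg (Γ - ![0, 0, 1])
  unfold uprightSqDist sphPendLyapunov
  nlinarith [mul_le_mul_of_nonneg_right (le_abs_self A) hX,
    mul_le_mul_of_nonneg_right (le_abs_self B) hY,
    mul_le_mul_of_nonneg_right (le_abs_self ρ)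
      (dotProduct_self_nonneg (sphPendMomentum m l ρ Ω₁ Ω₂ v)),
    mul_le_mul_of_nonneg_left hP (abs_nonneg ρ),
    mul_nonneg (abs_nonneg A) hW, mul_nonneg (abs_nonneg A) hY,
    mul_nonneg (abs_nonneg B) hX, mul_nonneg (abs_nonneg B) hW,
    mul_nonneg hK hX, mul_nonneg hK hW, mul_nonneg hK hY,
    mul_nonneg (mul_nonneg (abs_nonneg ρ) (sq_nonneg ρ)) hX,
    mul_nonneg (mul_nonneg (abs_nonneg ρ) (sq_nonneg (m * l))) hW]

theorem hasDerivAt_sphPendMomentum {m l ρ a b t : ℝ} {Ω₁ Ω₂ : ℝ → ℝ} {v : ℝ → Fin 3 → ℝ}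
    {w : Fin 3 → ℝ} (hΩ₁ : HasDerivAt Ω₁ a t) (hΩ₂ : HasDerivAt Ω₂ b t)
    (hv : HasDerivAt v w t) :
    HasDerivAt (fun s => ![ρ * v s 0 + m * l * Ω₂ s, ρ * v s 1 - m * l * Ω₁ s, ρ * v s 2])
      (sphPendMomentum m l ρ a b w) t :=
  hasDerivAt_vec3 (((hasDerivAt_pi.1 hv 0).const_mul ρ).add (hΩ₂.const_mul (m * l)))
    (((hasDerivAt_pi.1 hv 1).const_mul ρ).sub (hΩ₁.const_mul (m * l)))
    ((hasDerivAt_pi.1 hv 2).const_mul ρ)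

namespace SphPendCL

variable {m l g ρ : ℝ} {Ω₁ Ω₂ : ℝ → ℝ} {v Γ : ℝ → Fin 3 → ℝ}

theorem dotProduct_self_momentum_eq (h : SphPendCL m l g ρ Ω₁ Ω₂ v Γ) (t : ℝ) :
    sphPendMomentum m l ρ (Ω₁ t) (Ω₂ t) (v t) ⬝ᵥ sphPendMomentum m l ρ (Ω₁ t) (Ω₂ t) (v t)
      = sphPendMomentum m l ρ (Ω₁ 0) (Ω₂ 0) (v 0) ⬝ᵥ sphPendMomentum m l ρ (Ω₁ 0) (Ω₂ 0) (v 0) :=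
  dotProduct_self_eq_of_deriv_eq_cross (fun s => (hasDerivAt_sphPendMomentum
    (h.1 s).hasDerivAt (h.2.1 s).hasDerivAt (h.2.2.1 s).hasDerivAt).differentiableAt)
    h.2.2.2.2.2.2.1 t

theorem dotProduct_self_Γ_eq (h : SphPendCL m l g ρ Ω₁ Ω₂ v Γ) (t : ℝ) :
    Γ t ⬝ᵥ Γ t = Γ 0 ⬝ᵥ Γ 0 :=
  dotProduct_self_eq_of_deriv_eq_cross h.2.2.2.1 h.2.2.2.2.2.2.2 t

theorem angular_accel (h : SphPendCL m l g ρ Ω₁ Ω₂ v Γ) (t : ℝ) :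
    m * l ^ 2 * (m - ρ) * deriv Ω₁ t = -(ρ * m * g * l * Γ t 1) ∧
      m * l ^ 2 * (m - ρ) * deriv Ω₂ t = ρ * m * g * l * Γ t 0 := by
  obtain ⟨hΩ₁, hΩ₂, hv, -, hμ₀, hμ₁, hp, -⟩ := h
  have hv₀ : HasDerivAt (fun s => v s 0) (deriv v t 0) t := hasDerivAt_pi.1 (hv t).hasDerivAt 0
  have hv₁ : HasDerivAt (fun s => v s 1) (deriv v t 1) t := hasDerivAt_pi.1 (hv t).hasDerivAt 1
  have hμ := hasDerivAt_vec3
    (((hΩ₁ t).hasDerivAt.const_mul (m * l ^ 2)).fun_sub (hv₁.const_mul (m * l)))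
    (((hΩ₂ t).hasDerivAt.const_mul (m * l ^ 2)).fun_add (hv₀.const_mul (m * l)))
    (hasDerivAt_const t (0 : ℝ))
  have hpt := hasDerivAt_sphPendMomentum (m := m) (l := l) (ρ := ρ)
    (hΩ₁ t).hasDerivAt (hΩ₂ t).hasDerivAt (hv t).hasDerivAt
  have e₀ := hμ₀ t
  have e₁ := hμ₁ t
  have e₂ := congrFun (hp t) 0
  have e₃ := congrFun (hp t) 1
  rw [hμ.deriv] at e₀ e₁
  rw [hpt.deriv] at e₂ e₃
  simp only [cross_apply, sphPendMomentum, cons_val_zero, cons_val_one, cons_val,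
    Pi.sub_apply, Pi.add_apply, Pi.smul_apply, smul_eq_mul] at e₀ e₁ e₂ e₃
  constructor
  · linear_combination -ρ * e₀ - m * l * e₃
  · linear_combination -ρ * e₁ + m * l * e₂

theorem energy_eq (h : SphPendCL m l g ρ Ω₁ Ω₂ v Γ) (t : ℝ) :
    m * l ^ 2 * (m - ρ) * (Ω₁ t ^ 2 + Ω₂ t ^ 2) - 2 * ρ * m * g * l * Γ t 2
      = m * l ^ 2 * (m - ρ) * (Ω₁ 0 ^ 2 + Ω₂ 0 ^ 2) - 2 * ρ * m * g * l * Γ 0 2 := by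
  refine eq_of_forall_hasDerivAt_zero (f := fun s => m * l ^ 2 * (m - ρ) * (Ω₁ s ^ 2 + Ω₂ s ^ 2)
    - 2 * ρ * m * g * l * Γ s 2) (fun s => ?_) t
  obtain ⟨hΩ₁, hΩ₂⟩ := h.angular_accel s
  have hΓ₂ : deriv Γ s 2 = Γ s 0 * Ω₂ s - Γ s 1 * Ω₁ s := by
    simpa [cross_apply] using congrFun (h.2.2.2.2.2.2.2 s) 2
  refine (((((h.1 s).hasDerivAt.fun_pow 2).fun_add ((h.2.1 s).hasDerivAt.fun_pow 2)).const_mul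
    (m * l ^ 2 * (m - ρ))).fun_sub
    ((hasDerivAt_pi.1 (h.2.2.2.1 s).hasDerivAt 2).const_mul (2 * ρ * m * g * l))).congr_deriv ?_
  linear_combination 2 * Ω₁ s * hΩ₁ + 2 * Ω₂ s * hΩ₂ - 2 * ρ * m * g * l * hΓ₂

theorem sphPendLyapunov_eq (h : SphPendCL m l g ρ Ω₁ Ω₂ v Γ) (t : ℝ) :
    sphPendLyapunov m l g ρ (Ω₁ t) (Ω₂ t) (v t) (Γ t)
      = sphPendLyapunov m l g ρ (Ω₁ 0) (Ω₂ 0) (v 0) (Γ 0) := by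
  rw [sphPendLyapunov_eq_energy_add_casimirs, sphPendLyapunov_eq_energy_add_casimirs,
    h.energy_eq, h.dotProduct_self_Γ_eq, h.dotProduct_self_momentum_eq]

end SphPendCL

theorem sphPend_upright_stable_general (m l g ρ : ℝ) (hl : 0 < l) (hg : 0 < g)
    (hρ : 0 < ρ) (hρm : ρ < m) :
    ∀ ε > (0 : ℝ), ∃ δ > (0 : ℝ),
      ∀ (Ω₁ Ω₂ : ℝ → ℝ) (v Γ : ℝ → Fin 3 → ℝ), SphPendCL m l g ρ Ω₁ Ω₂ v Γ →
        Real.sqrt ((Ω₁ 0) ^ 2 + (Ω₂ 0) ^ 2 + v 0 ⬝ᵥ v 0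
            + (Γ 0 - ![(0 : ℝ), 0, 1]) ⬝ᵥ (Γ 0 - ![(0 : ℝ), 0, 1])) < δ →
        ∀ t ≥ (0 : ℝ),
          Real.sqrt ((Ω₁ t) ^ 2 + (Ω₂ t) ^ 2 + v t ⬝ᵥ v t
            + (Γ t - ![(0 : ℝ), 0, 1]) ⬝ᵥ (Γ t - ![(0 : ℝ), 0, 1])) < ε := by
  intro ε hε
  obtain ⟨c₁, hc₁, hlow⟩ := exists_pos_mul_uprightSqDist_le_sphPendLyapunov hl hg hρ hρm
  obtain ⟨c₂, hc₂, hup⟩ := exists_pos_sphPendLyapunov_le_mul_uprightSqDist m l g ρ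
  refine ⟨ε * √(c₁ / c₂), by positivity, fun Ω₁ Ω₂ v Γ h h₀ t _ => ?_⟩
  refine sqrt_lt_of_mul_le_mul hc₁ hc₂ ?_ h₀
  calc c₁ * uprightSqDist (Ω₁ t) (Ω₂ t) (v t) (Γ t)
      ≤ sphPendLyapunov m l g ρ (Ω₁ t) (Ω₂ t) (v t) (Γ t) := hlow _ _ _ _
    _ = sphPendLyapunov m l g ρ (Ω₁ 0) (Ω₂ 0) (v 0) (Γ 0) := h.sphPendLyapunov_eq t
    _ ≤ c₂ * uprightSqDist (Ω₁ 0) (Ω₂ 0) (v 0) (Γ 0) := hup _ _ _ _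

/-- Lyapunov stability of the upright equilibrium `(Ω₁, Ω₂, v, Γ) = (0, 0, 0, e₃)` of
the spherical-pendulum closed-loop system, for any kinetic-shaping parameter
`0 < ρ < m`.  The distance is the Euclidean norm on `ℝ⁸`. -/
theorem sphPend_upright_stable (m l g ρ : ℝ) (hm : 0 < m) (hl : 0 < l) (hg : 0 < g)
    (hρ : 0 < ρ) (hρm : ρ < m) :
    ∀ ε > (0 : ℝ), ∃ δ > (0 : ℝ),
      ∀ (Ω₁ Ω₂ : ℝ → ℝ) (v Γ : ℝ → Fin 3 → ℝ), SphPendCL m l g ρ Ω₁ Ω₂ v Γ →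
        Real.sqrt ((Ω₁ 0) ^ 2 + (Ω₂ 0) ^ 2 + v 0 ⬝ᵥ v 0
            + (Γ 0 - ![(0 : ℝ), 0, 1]) ⬝ᵥ (Γ 0 - ![(0 : ℝ), 0, 1])) < δ →
        ∀ t ≥ (0 : ℝ),
          Real.sqrt ((Ω₁ t) ^ 2 + (Ω₂ t) ^ 2 + v t ⬝ᵥ v t
            + (Γ t - ![(0 : ℝ), 0, 1]) ⬝ᵥ (Γ t - ![(0 : ℝ), 0, 1])) < ε :=
  sphPend_upright_stable_general m l g ρ hl hg hρ hρm
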